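/- Let X be a topological space and let τ be a topology on C(X,$) whose open sets are all openly isotone. For each n ≥ 1 let αₙ be a filter on C(X,$) admitting a base of openly isotone families, and suppose αₙ converges to X (the whole space, as an element of C(X,$)) in τ. Then the filter on C(X,ℝ) generated by the sets [𝒜,Wₙ] := {f ∈ C(X,ℝ) : f⁻¹(Wₙ) ∈ 𝒜}, for n ≥ 1 and 𝒜 ∈ αₙ (i.e. the supremum ⋁ₙ [αₙ,Wₙ]), converges to the zero function 0̄ in the topology τ^⇑. -/

import Mathlib

open TopologicalSpace Topology

/-- A family of open sets is *openly isotone* if it is upward closed among open sets. -/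
def OpenlyIsotone {X : Type*} [TopologicalSpace X] (A : Set (Opens X)) : Prop :=
  ∀ ⦃U V : Opens X⦄, U ∈ A → U ≤ V → V ∈ A

/-- The preimage of an open set under a continuous map, as an open set. -/
def preim {X Z : Type*} [TopologicalSpace X] [TopologicalSpace Z]
    (f : C(X, Z)) (U : Opens Z) : Opens X :=
  ⟨f ⁻¹' U, U.isOpen.preimage f.continuous⟩

/-- The basic open neighborhood `Wₙ = (-1/n, 1/n)` of `0` in `ℝ`. -/
def Wball (n : ℕ) : Opens ℝ :=
  ⟨Set.Ioo (-(1 / (n : ℝ))) (1 / (n : ℝ)), isOpen_Ioo⟩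

/-- The topology `τ^⇑` on `C(X,ℝ)`: the initial topology induced by the maps
`f ↦ f⁻¹(U)` into `(C(X,$), τ)`, `U` ranging over open subsets of `ℝ`. -/
def upTop {X : Type*} [TopologicalSpace X] (τ : TopologicalSpace (Opens X)) :
    TopologicalSpace C(X, ℝ) :=
  ⨅ U : Opens ℝ, TopologicalSpace.induced (fun f : C(X, ℝ) => preim f U) τ

open Filter

/-! Since `(0 : C(X,ℝ))⁻¹(U)` is either `X` or `∅`, and every `τ`-open set is upward closed,
only the neighbourhoods of `⊤` matter; for those, choose `Wₙ ⊆ U` and use that `f⁻¹(Wₙ) ≤ f⁻¹(U)`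
and `αₙ → ⊤`. -/

section UpperOpens

variable {P : Type*} [Preorder P] [TopologicalSpace P]

theorem nhds_bot_eq_top_of_isUpperSet [OrderBot P]
    (hup : ∀ s : Set P, IsOpen s → IsUpperSet s) : 𝓝 (⊥ : P) = ⊤ :=
  eq_top_iff.2 fun _ hs => mem_top.2 <|
    let ⟨t, hts, ht, hbot⟩ := mem_nhds_iff.1 hs
    Set.eq_univ_of_forall fun _ => hts (hup t ht bot_le hbot)

theorem Filter.Tendsto.of_le_of_isUpperSet {ι : Type*} {l : Filter ι} {g h : ι → P} {a : P}
    (hup : ∀ s : Set P, IsOpen s → IsUpperSet s) (hgh : ∀ i, g i ≤ h i)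
    (hg : Tendsto g l (𝓝 a)) : Tendsto h l (𝓝 a) :=
  tendsto_nhds.2 fun s hs has =>
    mem_of_superset (tendsto_nhds.1 hg s hs has) fun _ hi => hup s hs (hgh _) hi

end UpperOpens

theorem OpenlyIsotone.isUpperSet {X : Type*} [TopologicalSpace X] {A : Set (Opens X)}
    (hA : OpenlyIsotone A) : IsUpperSet A :=
  fun _ _ hle hU => hA hU hle

section Preim

variable {X Z : Type*} [TopologicalSpace X] [TopologicalSpace Z]

theorem preim_mono (f : C(X, Z)) {U V : Opens Z} (hUV : U ≤ V) : preim f U ≤ preim f V :=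
  fun _ hx => hUV hx

variable [Zero Z] {U : Opens Z}

theorem preim_zero_of_mem (h : (0 : Z) ∈ U) : preim (0 : C(X, Z)) U = ⊤ :=
  Opens.ext <| Set.eq_univ_of_forall fun _ => h

theorem preim_zero_of_notMem (h : (0 : Z) ∉ U) : preim (0 : C(X, Z)) U = ⊥ :=
  Opens.ext <| Set.eq_empty_of_forall_notMem fun _ => h

end Preim

theorem exists_wball_le {U : Opens ℝ} (hU : (0 : ℝ) ∈ U) : ∃ n, 1 ≤ n ∧ Wball n ≤ U := by
  obtain ⟨ε, hε, hball⟩ := Metric.isOpen_iff.1 U.isOpen 0 hU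
  obtain ⟨n, hn⟩ := exists_nat_one_div_lt hε
  refine ⟨n + 1, n.succ_pos, fun x ⟨hlo, hhi⟩ => hball ?_⟩
  rw [Real.ball_eq_Ioo, zero_sub, zero_add]
  push_cast at hlo hhi
  constructor <;> linarith

theorem tendsto_preim_wball_generate {X : Type*} [TopologicalSpace X]
    (α : ℕ → Filter (Opens X)) {n : ℕ} (hn : 1 ≤ n) :
    Tendsto (preim · (Wball n))
      (generate {S : Set C(X, ℝ) |
        ∃ n, 1 ≤ n ∧ ∃ A ∈ α n, S = {f : C(X, ℝ) | preim f (Wball n) ∈ A}}) (α n) :=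
  fun A hA => mem_generate_of_mem ⟨n, hn, A, hA, rfl⟩

theorem sup_erected_tendsto_zero_general {X : Type*} [TopologicalSpace X]
    (τ : TopologicalSpace (Opens X))
    (hiso : ∀ S : Set (Opens X), IsOpen[τ] S → OpenlyIsotone S)
    (α : ℕ → Filter (Opens X))
    (hconv : ∀ n, 1 ≤ n → α n ≤ @nhds _ τ (⊤ : Opens X)) :
    Filter.generate
        {S : Set C(X, ℝ) |
          ∃ n, 1 ≤ n ∧ ∃ A ∈ α n, S = {f : C(X, ℝ) | preim f (Wball n) ∈ A}} ≤
      @nhds _ (upTop τ) (0 : C(X, ℝ)) := by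
  let _ : TopologicalSpace (Opens X) := τ
  have hup : ∀ S : Set (Opens X), IsOpen S → IsUpperSet S := fun S hS => (hiso S hS).isUpperSet
  rw [upTop, nhds_iInf]
  refine le_iInf fun U => ?_
  rw [nhds_induced]
  refine Tendsto.le_comap ?_
  by_cases hU : (0 : ℝ) ∈ U
  · rw [preim_zero_of_mem hU]
    obtain ⟨n, hn, hWU⟩ := exists_wball_le hU
    exact ((tendsto_preim_wball_generate α hn).mono_right (hconv n hn)).of_le_of_isUpperSet hup
      fun f => preim_mono f hWU
  · rw [preim_zero_of_notMem hU, nhds_bot_eq_top_of_isUpperSet hup]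
    exact tendsto_top

/-- If for each `n ≥ 1` the filter `αₙ` on `C(X,$)` has a base of openly isotone families
and converges to `X` in `τ`, then the filter on `C(X,ℝ)` generated by the sets `[𝒜,Wₙ]`
(`n ≥ 1`, `𝒜 ∈ αₙ`), i.e. the supremum `⋁ₙ [αₙ,Wₙ]`, converges to the zero function in
`τ^⇑`. -/
theorem sup_erected_tendsto_zero {X : Type*} [TopologicalSpace X]
    (τ : TopologicalSpace (Opens X))
    (hiso : ∀ S : Set (Opens X), IsOpen[τ] S → OpenlyIsotone S)
    (α : ℕ → Filter (Opens X))
    (hbase : ∀ n, 1 ≤ n → ∀ S ∈ α n, ∃ A ∈ α n, A ⊆ S ∧ OpenlyIsotone A)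
    (hconv : ∀ n, 1 ≤ n → α n ≤ @nhds _ τ (⊤ : Opens X)) :
    Filter.generate
        {S : Set C(X, ℝ) |
          ∃ n, 1 ≤ n ∧ ∃ A ∈ α n, S = {f : C(X, ℝ) | preim f (Wball n) ∈ A}} ≤
      @nhds _ (upTop τ) (0 : C(X, ℝ)) :=
  sup_erected_tendsto_zero_general τ hiso α hconv
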